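/- arXiv:2601.07017 — 2 statements merged into one kernel-verified Lean document; each statement's English description precedes it below -/
import Mathlib

section
/- Let d ∈ ℕ, N ≥ 1, and r ≥ 0, and let {z_1, ..., z_N} ⊂ ℝ^d be distinct points. Then there exist ℓ = (d + r)·N affine hyperplanes A_1, ..., A_ℓ in ℝ^d such that: (i) each z_i lies on exactly d + r of the hyperplanes; and (ii) the family is admissible, i.e., every d distinct hyperplanes among A_1, ..., A_ℓ intersect in exactly one point. -/
open Polynomial Finset


/-- Admissible hyperplanes with prescribed multiplicities: for distinct points
`z 1, …, z N` in `ℝ^d` there exist `ℓ = (d + r) * N` affine hyperplanes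
`A j = {x | v j · x = b j}` (with nonzero normals `v j`) such that each `z i` lies on
exactly `d + r` of them, and every `d` distinct hyperplanes intersect in exactly one
point. -/
theorem admissible_hyperplanes_with_multiplicities
    (d N r : ℕ) (hd : 1 ≤ d) (hN : 1 ≤ N)
    (z : Fin N → (Fin d → ℝ)) (hz : Function.Injective z) :
    ∃ (v : Fin ((d + r) * N) → (Fin d → ℝ)) (b : Fin ((d + r) * N) → ℝ),
      (∀ j, v j ≠ 0) ∧
      (∀ i : Fin N,
        (Finset.univ.filter (fun j : Fin ((d + r) * N) =>
          ∑ k, v j k * z i k = b j)).card = d + r) ∧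
      (∀ I : Finset (Fin ((d + r) * N)), I.card = d →
        ∃! x : Fin d → ℝ, ∀ j ∈ I, ∑ k, v j k * x k = b j) := by
  classical
  set ℓ := (d + r) * N with hℓ
  set p : Fin N → Fin N → ℝ[X] :=
    fun i i' => ∑ k : Fin d, C (z i k - z i' k) * X ^ (k : ℕ) with hp
  have hcoeff : ∀ i i' (k0 : Fin d), (p i i').coeff (k0 : ℕ) = z i k0 - z i' k0 := by
    intro i i' k0
    rw [hp]
    simp only [finset_sum_coeff, coeff_C_mul, coeff_X_pow]
    rw [Finset.sum_eq_single k0]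
    · simp
    · intro k _ hk
      have : ¬ ((k0 : ℕ) = (k : ℕ)) := fun h => hk (Fin.ext h.symm)
      simp [this]
    · simp
  have hpne : ∀ i i', i ≠ i' → p i i' ≠ 0 := by
    intro i i' hne hcon
    apply hne
    apply hz
    funext k
    have := hcoeff i i' k
    rw [hcon] at this
    simp at this
    linarith [this]
  set S : Finset ℝ :=
    Finset.univ.biUnion (fun q : Fin N × Fin N => (p q.1 q.2).roots.toFinset) with hS
  obtain ⟨T, hTsub, hTcard⟩ := (S.finite_toSet.infinite_compl).exists_subset_card_eq ℓ
  set t : Fin ℓ → ℝ := fun j => (T.orderIsoOfFin hTcard j : ℝ) with ht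
  have htinj : Function.Injective t := by
    intro a b hab
    exact (T.orderIsoOfFin hTcard).injective (Subtype.ext hab)
  have htS : ∀ j, t j ∉ S := by
    intro j hj
    exact (hTsub (T.orderIsoOfFin hTcard j).2) hj
  have heval : ∀ i i' (x : ℝ), (p i i').eval x =
      ∑ k : Fin d, (z i k - z i' k) * x ^ (k : ℕ) := by
    intro i i' x; rw [hp]; simp [eval_finset_sum]
  have hkey : ∀ (j : Fin ℓ) (i i' : Fin N), i ≠ i' →
      ∑ k : Fin d, (z i k - z i' k) * (t j) ^ (k : ℕ) ≠ 0 := by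
    intro j i i' hne hcon
    apply htS j
    rw [hS]
    apply Finset.mem_biUnion.2 ⟨(i, i'), Finset.mem_univ _, ?_⟩
    rw [Multiset.mem_toFinset, mem_roots (hpne i i' hne)]
    rw [IsRoot, heval]
    exact hcon
  set idx : Fin ℓ → Fin N := fun j => (finProdFinEquiv.symm j).2 with hidx
  refine ⟨fun j k => (t j) ^ (k : ℕ),
    fun j => ∑ k : Fin d, (t j) ^ (k : ℕ) * z (idx j) k, ?_, ?_, ?_⟩
  · intro j hcon
    have := congrFun hcon ⟨0, hd⟩
    simp at this
  · -- multiplicities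
    intro i
    have hmem : ∀ j : Fin ℓ,
        ((∑ k : Fin d, (t j) ^ (k : ℕ) * z i k = ∑ k : Fin d, (t j) ^ (k : ℕ) * z (idx j) k)
          ↔ idx j = i) := by
      intro j
      constructor
      · intro h
        by_contra hne
        apply hkey j i (idx j) (fun hc => hne hc.symm)
        have heq : ∑ k : Fin d, ((z i k - z (idx j) k) * (t j) ^ (k : ℕ)) =
            (∑ k : Fin d, (t j) ^ (k : ℕ) * z i k) -
            ∑ k : Fin d, (t j) ^ (k : ℕ) * z (idx j) k := by
          rw [← Finset.sum_sub_distrib]; congr 1; funext k; ring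
        rw [heq, h, sub_self]
      · intro h; rw [h]
    have himg : (Finset.univ.filter (fun j : Fin ℓ =>
          ∑ k : Fin d, (t j) ^ (k : ℕ) * z i k =
            ∑ k : Fin d, (t j) ^ (k : ℕ) * z (idx j) k)) =
        Finset.image (fun a : Fin (d + r) => finProdFinEquiv (a, i)) Finset.univ := by
      ext j
      simp only [Finset.mem_filter, Finset.mem_univ, true_and, Finset.mem_image, hmem j]
      constructor
      · intro h
        refine ⟨(finProdFinEquiv.symm j).1, ?_⟩
        have hpr : ((finProdFinEquiv.symm j).1, i) = finProdFinEquiv.symm j := by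
          rw [hidx] at h
          exact Prod.ext rfl h.symm
        rw [hpr, Equiv.apply_symm_apply]
      · rintro ⟨a, -, rfl⟩
        rw [hidx]
        simp
    rw [himg, Finset.card_image_of_injective _ (fun a b hab =>
      (Prod.ext_iff.1 (finProdFinEquiv.injective hab)).1),
      Finset.card_univ, Fintype.card_fin]
  · -- unique intersection of any d hyperplanes
    intro I hI
    set σ : Fin d ≃o ↑I := I.orderIsoOfFin hI with hσ
    set u : Fin d → ℝ := fun a => t (σ a) with hu
    have huinj : Function.Injective u := by
      intro a b hab
      exact σ.injective (Subtype.ext (htinj hab))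
    set M : Matrix (Fin d) (Fin d) ℝ := Matrix.vandermonde u with hM
    have hdet : M.det ≠ 0 := by
      rw [hM, Matrix.det_vandermonde]
      apply Finset.prod_ne_zero_iff.2
      intro a _
      apply Finset.prod_ne_zero_iff.2
      intro c' hc'
      have hac : a ≠ c' := by
        rintro rfl; exact absurd (Finset.mem_Ioi.1 hc') (lt_irrefl a)
      exact sub_ne_zero.2 (fun h => hac (huinj h.symm))
    have hMunit : IsUnit M.det := isUnit_iff_ne_zero.2 hdet
    set c : Fin d → ℝ :=
      fun a => ∑ k : Fin d, (t (σ a)) ^ (k : ℕ) * z (idx (σ a)) k with hc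
    have hMa : ∀ (x : Fin d → ℝ) (a : Fin d),
        M.mulVec x a = ∑ k : Fin d, (t (σ a)) ^ (k : ℕ) * x k := by
      intro x a
      simp [hM, Matrix.mulVec, dotProduct, Matrix.vandermonde, hu]
    have hequiv : ∀ x : Fin d → ℝ,
        ((∀ j ∈ I, ∑ k : Fin d, (t j) ^ (k : ℕ) * x k =
            ∑ k : Fin d, (t j) ^ (k : ℕ) * z (idx j) k) ↔ M.mulVec x = c) := by
      intro x
      constructor
      · intro h
        funext a
        rw [hMa]
        exact h (σ a) (σ a).2
      · intro h j hj
        have ha := congrFun h (σ.symm ⟨j, hj⟩)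
        rw [hMa] at ha
        have hsj : ((σ (σ.symm ⟨j, hj⟩) : ↑I) : Fin ℓ) = j := by
          rw [OrderIso.apply_symm_apply]
        rw [hc] at ha
        simp only [hsj] at ha
        exact ha
    refine ⟨M⁻¹.mulVec c, ?_, ?_⟩
    · exact (hequiv (M⁻¹.mulVec c)).2 (by
        rw [Matrix.mulVec_mulVec, Matrix.mul_nonsing_inv _ hMunit, Matrix.one_mulVec])
    · intro x hx
      have hx' := (hequiv x).1 hx
      calc x = (M⁻¹ * M).mulVec x := by
              rw [Matrix.nonsing_inv_mul _ hMunit, Matrix.one_mulVec]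
        _ = M⁻¹.mulVec c := by rw [← Matrix.mulVec_mulVec, hx']
end

section
/- Consider the ODE problem u'(z) = a on (0, T) with u(0) = u₀, where a > 0 and u₀ ≥ 0, and collocation points 0 < z₁ < ⋯ < z_N < T. For parameters w₁, w₂ > 0 with w₁ + w₂ = a and 0 ≤ b < z₁·w₂, define u(z) = max(0, w₁ z + u₀) + max(0, w₂ z − b). Then u(0) = u₀, u is differentiable at each z_i with u'(z_i) = a for all i = 1, ..., N, so u achieves zero AD-PINN loss (1/N)Σᵢ |u'(zᵢ) − a|^ν + |u(0) − u₀|^ν. In particular, there are infinitely many distinct such zero-loss functions, parameterized by b ∈ [0, z₁w₂). -/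
theorem HasDerivAt.max_zero_of_pos {f : ℝ → ℝ} {f' x : ℝ} (hf : HasDerivAt f f' x)
    (hx : 0 < f x) : HasDerivAt (fun y => max 0 (f y)) f' x :=
  hf.congr_of_eventuallyEq <|
    (continuousAt_const.eventually_lt hf.continuousAt hx).mono fun _ hy => max_eq_right hy.le

theorem hasDerivAt_relu_mul_add_of_pos {w c x : ℝ} (h : 0 < w * x + c) :
    HasDerivAt (fun y => max 0 (w * y + c)) w x := by
  simpa using (((hasDerivAt_id' x).const_mul w).add_const c).max_zero_of_pos h

theorem relu_adpinn_infinitely_many_zero_loss_general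
    (a u₀ : ℝ) (hu₀ : 0 ≤ u₀)
    (N : ℕ) (hN : 0 < N) (z : Fin N → ℝ)
    (hz0 : ∀ i, 0 < z i) (hzmono : StrictMono z)
    (w₁ w₂ b : ℝ) (hw₁ : 0 < w₁) (hw₂ : 0 < w₂) (hsum : w₁ + w₂ = a)
    (hb0 : 0 ≤ b) (hb : b < z ⟨0, hN⟩ * w₂)
    (ν : ℝ) (hν : 1 ≤ ν)
    (u : ℝ → ℝ) (hu : ∀ x, u x = max 0 (w₁ * x + u₀) + max 0 (w₂ * x - b)) :
    u 0 = u₀ ∧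
    (∀ i, HasDerivAt u a (z i)) ∧
    ((1 / (N : ℝ)) * ∑ i, |deriv u (z i) - a| ^ ν + |u 0 - u₀| ^ ν = 0) ∧
    u (z ⟨0, hN⟩) = a * z ⟨0, hN⟩ + u₀ - b := by
  have hnet : u = (fun y => max 0 (w₁ * y + u₀)) + fun y => max 0 (w₂ * y + -b) := by
    funext x; rw [hu, Pi.add_apply, sub_eq_add_neg]
  have hactive : ∀ i, 0 < w₁ * z i + u₀ ∧ 0 < w₂ * z i + -b := fun i => by
    have hz : z ⟨0, hN⟩ ≤ z i := hzmono.monotone (Fin.mk_le_of_le_val (Nat.zero_le _))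
    have := hz0 i
    constructor <;> nlinarith
  have hderiv : ∀ i, HasDerivAt u a (z i) := fun i => hnet ▸ hsum ▸
    (hasDerivAt_relu_mul_add_of_pos (hactive i).1).add (hasDerivAt_relu_mul_add_of_pos (hactive i).2)
  have hu0 : u 0 = u₀ := by simp [hu, hu₀, hb0]
  have hν0 : ν ≠ 0 := by positivity
  refine ⟨hu0, hderiv, ?_, ?_⟩
  · simp [fun i => (hderiv i).deriv, hu0, Real.zero_rpow hν0]
  · obtain ⟨h₁, h₂⟩ := hactive ⟨0, hN⟩
    rw [← sub_eq_add_neg] at h₂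
    rw [hu, max_eq_right h₁.le, max_eq_right h₂.le, ← hsum]
    ring

/-- For the ODE `u' = a` on `(0,T)` with `u 0 = u₀` (`a > 0`, `u₀ ≥ 0`) and
collocation points `0 < z 0 < ⋯ < z (N-1) < T`, every ReLU network of the form
`u z = max 0 (w₁ z + u₀) + max 0 (w₂ z - b)` with `w₁, w₂ > 0`, `w₁ + w₂ = a`, and
`0 ≤ b < z 0 * w₂`, satisfies `u 0 = u₀`, is differentiable at each `z i` with
derivative `a`, achieves zero AD-PINN loss, and takes the value
`u (z 0) = a * z 0 + u₀ - b`, so distinct `b` give distinct zero-loss minimizers. -/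
theorem relu_adpinn_infinitely_many_zero_loss
    (T a u₀ : ℝ) (ha : 0 < a) (hu₀ : 0 ≤ u₀)
    (N : ℕ) (hN : 0 < N) (z : Fin N → ℝ)
    (hz0 : ∀ i, 0 < z i) (hzT : ∀ i, z i < T) (hzmono : StrictMono z)
    (w₁ w₂ b : ℝ) (hw₁ : 0 < w₁) (hw₂ : 0 < w₂) (hsum : w₁ + w₂ = a)
    (hb0 : 0 ≤ b) (hb : b < z ⟨0, hN⟩ * w₂)
    (ν : ℝ) (hν : 1 ≤ ν)
    (u : ℝ → ℝ) (hu : ∀ x, u x = max 0 (w₁ * x + u₀) + max 0 (w₂ * x - b)) :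
    u 0 = u₀ ∧
    (∀ i, HasDerivAt u a (z i)) ∧
    ((1 / (N : ℝ)) * ∑ i, |deriv u (z i) - a| ^ ν + |u 0 - u₀| ^ ν = 0) ∧
    u (z ⟨0, hN⟩) = a * z ⟨0, hN⟩ + u₀ - b :=
  relu_adpinn_infinitely_many_zero_loss_general a u₀ hu₀ N hN z hz0 hzmono w₁ w₂ b hw₁ hw₂ hsum hb0
    hb ν hν u hu
end
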